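/- arXiv:1311.5810 — 2 statements merged into one kernel-verified Lean document; each statement's English description precedes it below -/
import Mathlib

section
/- For every type α, the linear Implies gadget computes truth-table implication: Implies True_{F_α} True_α = True_α, Implies True_{F_α} False_α = False_α, Implies False_{F_α} True_α = True_α, and Implies False_{F_α} False_α = True_α. -/
universe u

/-- The identity map on pairs, encoding the term `TT`. -/
def ttF (α : Type u) : α × α → α × α := id

/-- The swap map on pairs, encoding the term `FF`. -/
def ffF (α : Type u) : α × α → α × α := fun p => (p.2, p.1)

/-- `F α` is the type of pair transformers at `α`. -/
abbrev F (α : Type u) : Type u := α × α → α × α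

/-- The Boolean `True` at type `α`. -/
def Tru (α : Type u) : F α × F α := (ttF α, ffF α)

/-- The Boolean `False` at type `α`. -/
def Fls (α : Type u) : F α × F α := (ffF α, ttF α)

/-- The linear `Implies` gadget: takes a Boolean `b1` at type `F α` and a
Boolean `b2` at type `α`, and returns a Boolean at type `α`. -/
def Implies (α : Type u) (b1 : F (F α) × F (F α)) (b2 : F α × F α) : F α × F α :=
  let u1 := b1.1; let v1 := b1.2
  let u2 := b2.1; let v2 := b2.2
  let p := u1 (u2, ttF α)
  let q := v1 (ffF α, v2)
  (p.1, q.1 ∘ p.2 ∘ q.2 ∘ ffF α)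

/-! With `Tru (F α)` as first argument the gadget returns its second argument unchanged. With
`Fls (F α)` it returns `ffF ∘ u ∘ v ∘ ffF` as second component, where `(u, v)` is the second
argument, so it returns `Tru α` whenever `u ∘ v` is the swap, as it is for both `Tru α` and `Fls α`. -/

theorem ffF_comp_ffF (α : Type u) : ffF α ∘ ffF α = id := rfl

theorem implies_tru_left (α : Type u) (b : F α × F α) : Implies α (Tru (F α)) b = b := by
  change (b.1, b.2 ∘ (ffF α ∘ ffF α)) = b
  rw [ffF_comp_ffF, Function.comp_id]

theorem implies_fls_left (α : Type u) (b : F α × F α) (hb : b.1 ∘ b.2 = ffF α) :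
    Implies α (Fls (F α)) b = Tru α := by
  change (ttF α, ffF α ∘ (b.1 ∘ b.2) ∘ ffF α) = Tru α
  rw [hb, ← Function.comp_assoc, ffF_comp_ffF, Function.id_comp]
  rfl

/-- The `Implies` gadget computes truth-table implication. -/
theorem implies_correct (α : Type u) :
    Implies α (Tru (F α)) (Tru α) = Tru α ∧
    Implies α (Tru (F α)) (Fls α) = Fls α ∧
    Implies α (Fls (F α)) (Tru α) = Tru α ∧
    Implies α (Fls (F α)) (Fls α) = Tru α :=
  ⟨implies_tru_left α _, implies_tru_left α _, implies_fls_left α _ rfl,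
    implies_fls_left α _ rfl⟩
end

section
/- In the Implies gadget, the two principal components are always deMorgan duals, so the output is a well-formed Boolean: for all Boolean inputs b1 ∈ {True_{F_α}, False_{F_α}} and b2 ∈ {True_α, False_α}, with (p1, p2) := u1 (u2, tt_α) and (q1, q2) := v1 (ff_α, v2), the pair (p1, q1) equals (tt_α, ff_α) if the implication b1 ⊃ b2 holds (reading True_{F_α}/True_α as true and False_{F_α}/False_α as false) and equals (ff_α, tt_α) otherwise; in particular p1 = tt_α if and only if q1 = ff_α. -/
universe u

section

variable {α : Type u}

lemma ite_Tru_Fls_fst_apply (x : Bool) (p : α × α) :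
    (if x then Tru α else Fls α).1 p = if x then p else p.swap := by
  cases x <;> rfl

lemma ite_Tru_Fls_snd_apply (x : Bool) (p : α × α) :
    (if x then Tru α else Fls α).2 p = if x then p.swap else p := by
  cases x <;> rfl

variable (α)

/- `True` at `F α` passes `(u2, tt)` and `(ff, v2)` through while `False` swaps them, so `p1` is
`u2` or `tt` and `q1` is `v2` or `ff`; both are decided by whether `x → y`. -/
lemma implies_fst_principal (x y : Bool) :
    ((if x then Tru (F α) else Fls (F α)).1 ((if y then Tru α else Fls α).1, ttF α)).1 =
      if x = true → y = true then ttF α else ffF α := by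
  rw [ite_Tru_Fls_fst_apply]
  cases x <;> cases y <;> rfl

lemma implies_snd_principal (x y : Bool) :
    ((if x then Tru (F α) else Fls (F α)).2 (ffF α, (if y then Tru α else Fls α).2)).1 =
      if x = true → y = true then ffF α else ttF α := by
  rw [ite_Tru_Fls_snd_apply]
  cases x <;> cases y <;> rfl

end

/-- In the `Implies` gadget, the two principal components `p1`, `q1` are
deMorgan duals: reading `Tru` as true and `Fls` as false, `(p1, q1)` is
`(tt, ff)` if the implication holds and `(ff, tt)` otherwise; in particular
`p1 = tt ↔ q1 = ff`. -/
theorem implies_principal_deMorgan (α : Type u) (x y : Bool) :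
    let b1 := if x then Tru (F α) else Fls (F α)
    let b2 := if y then Tru α else Fls α
    let u1 := b1.1; let v1 := b1.2
    let u2 := b2.1; let v2 := b2.2
    let p1 := (u1 (u2, ttF α)).1
    let q1 := (v1 (ffF α, v2)).1
    (p1, q1) = (if x = true → y = true then (ttF α, ffF α) else (ffF α, ttF α)) ∧
    (p1 = ttF α ↔ q1 = ffF α) := by
  intro b1 b2 u1 v1 u2 v2 p1 q1
  have hp1 : p1 = if x = true → y = true then ttF α else ffF α := implies_fst_principal α x y
  have hq1 : q1 = if x = true → y = true then ffF α else ttF α := implies_snd_principal α x y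
  rw [hp1, hq1]
  split_ifs
  · exact ⟨rfl, iff_of_true rfl rfl⟩
  · exact ⟨rfl, eq_comm⟩
end
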